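/- arXiv:2002.00503 — 2 statements merged into one kernel-verified Lean document; each statement's English description precedes it below -/
import Mathlib

section
/- For every real number t in the open interval I = (θ, −13), one has 3(506 + 75t − t^3) > 0 and q5(t) < 0, and the three quotients (pa1(t) + pa2(t)·ω(t))/q5(t), (pb1(t) + pb2(t)·ω(t))/q5(t) and (ps1(t) + ps2(t)·ω(t))/q5(t) are all strictly positive; consequently α(t), β(t) and s(t) are well-defined positive real numbers. -/
/-!
On `I` we have `13 + t < 0` while `t - 11`, `t² + 11t + 46` and the cubic factor of `q5`
keep their signs, so the radicand is positive and `q5 t < 0`. Each numerator has the form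
`a + b ω` with `b < 0`, so it is negative as soon as `a² < b² ω²`; the difference `b² ω² - a²`
factors as `(13 + t)⁴ (t - 11) · cubic · r` with a degree-12 polynomial `r` that is negative on
`(-28, -13) ⊇ I`.
-/

noncomputable section

def ω (t : ℝ) : ℝ := Real.sqrt (3 * (506 + 75 * t - t ^ 3))

def q5 (t : ℝ) : ℝ := (t - 11) ^ 2 * (13 + t) ^ 5 * (-1763 + 75 * t + 111 * t ^ 2 + t ^ 3)

def pa1 (t : ℝ) : ℝ :=
  -78915159455 - 11841667910 * t + 6656486445 * t ^ 2 + 1445318328 * t ^ 3 -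
    98097774 * t ^ 4 - 45176292 * t ^ 5 - 1757742 * t ^ 6 + 383160 * t ^ 7 +
    20493 * t ^ 8 - 1094 * t ^ 9 + t ^ 10

def pa2 (t : ℝ) : ℝ :=
  -32 * (-237047 - 688048 * t - 631196 * t ^ 2 - 136576 * t ^ 3 + 52510 * t ^ 4 +
    7760 * t ^ 5 - 1292 * t ^ 6 - 160 * t ^ 7 + t ^ 8)

def pb1 (t : ℝ) : ℝ :=
  -83889211967 - 23402064230 * t - 1593364563 * t ^ 2 - 238787016 * t ^ 3 -
    84657966 * t ^ 4 - 8058276 * t ^ 5 + 964434 * t ^ 6 + 8760 * t ^ 7 +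
    5229 * t ^ 8 + 154 * t ^ 9 + t ^ 10

def pb2 (t : ℝ) : ℝ :=
  55296 * (2153 + 4729 * t + 3002 * t ^ 2 + 434 * t ^ 3 + 13 * t ^ 4 + 5 * t ^ 5)

def ps1 (t : ℝ) : ℝ :=
  -430297163879 - 140961934838 * t - 23363774235 * t ^ 2 - 3595306632 * t ^ 3 -
    594107646 * t ^ 4 - 113195268 * t ^ 5 - 1046526 * t ^ 6 + 1347960 * t ^ 7 +
    171621 * t ^ 8 - 10742 * t ^ 9 + 25 * t ^ 10

def ps2 (t : ℝ) : ℝ :=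
  -96 * (-94197721 - 28304354 * t - 6941146 * t ^ 2 - 1190186 * t ^ 3 - 19228 * t ^ 4 +
    154 * t ^ 5 - 310 * t ^ 6 - 398 * t ^ 7 + 5 * t ^ 8)

def α (t : ℝ) : ℝ := Real.sqrt ((pa1 t + pa2 t * ω t) / q5 t)

def β (t : ℝ) : ℝ := Real.sqrt ((pb1 t + pb2 t * ω t) / q5 t)

def s (t : ℝ) : ℝ := (1 / 7) * Real.sqrt ((ps1 t + ps2 t * ω t) / q5 t)

theorem add_mul_sqrt_neg {a b d : ℝ} (hb : b < 0) (h : a ^ 2 < b ^ 2 * d) :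
    a + b * √d < 0 := by
  have hd : 0 < d := pos_of_mul_pos_right ((sq_nonneg a).trans_lt h) (sq_nonneg b)
  have hsq : a ^ 2 < (-(b * √d)) ^ 2 := by
    rwa [neg_sq, mul_pow, Real.sq_sqrt hd.le]
  have hbd : 0 ≤ -(b * √d) :=
    neg_nonneg.2 (mul_nonpos_of_nonpos_of_nonneg hb.le (Real.sqrt_nonneg d))
  linarith [(abs_lt_of_sq_lt_sq' hsq hbd).2]

theorem gt_neg_28_of_cubic_eq_zero {x : ℝ} (hx : x ^ 3 + 27 * x ^ 2 - 93 * x - 1847 = 0) :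
    -28 < x := by
  by_contra! hle
  have hfactor : x ^ 3 + 27 * x ^ 2 - 93 * x - 1847 = (x + 28) * (x ^ 2 - x - 65) - 27 := by ring
  nlinarith [mul_nonpos_of_nonpos_of_nonneg (by linarith : x + 28 ≤ 0)
    (by nlinarith : 0 ≤ x ^ 2 - x - 65)]

def q5Cubic (t : ℝ) : ℝ := -1763 + 75 * t + 111 * t ^ 2 + t ^ 3

def ra (t : ℝ) : ℝ :=
  -11243366790769 - 1414302826044 * t + 1165440897006 * t ^ 2 + 225646565396 * t ^ 3 -
    38213311311 * t ^ 4 - 11448834552 * t ^ 5 + 152423364 * t ^ 6 + 231859656 * t ^ 7 +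
    11635425 * t ^ 8 - 1600204 * t ^ 9 - 138450 * t ^ 10 - 732 * t ^ 11 - t ^ 12

def rb (t : ℝ) : ℝ :=
  -12666715895089 - 4705312112508 * t - 1149454053714 * t ^ 2 - 215500680364 * t ^ 3 -
    23010412239 * t ^ 4 - 2438112888 * t ^ 5 - 177690300 * t ^ 6 - 8874936 * t ^ 7 -
    2141919 * t ^ 8 + 30452 * t ^ 9 - 5394 * t ^ 10 - 156 * t ^ 11 - t ^ 12

def rs (t : ℝ) : ℝ :=
  -110168346124321 - 31918967442108 * t - 509507666610 * t ^ 2 + 1830406334996 * t ^ 3 +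
    381497782689 * t ^ 4 + 35375968008 * t ^ 5 - 2790590460 * t ^ 6 - 1277449272 * t ^ 7 -
    240229359 * t ^ 8 - 21928780 * t ^ 9 - 1781874 * t ^ 10 - 59100 * t ^ 11 - 625 * t ^ 12

theorem pa2_sq_mul_sub_pa1_sq (t : ℝ) :
    pa2 t ^ 2 * (3 * (506 + 75 * t - t ^ 3)) - pa1 t ^ 2 =
      (13 + t) ^ 4 * (t - 11) * q5Cubic t * ra t := by
  unfold pa1 pa2 q5Cubic ra; ring

theorem pb2_sq_mul_sub_pb1_sq (t : ℝ) :
    pb2 t ^ 2 * (3 * (506 + 75 * t - t ^ 3)) - pb1 t ^ 2 =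
      (13 + t) ^ 4 * (t - 11) * q5Cubic t * rb t := by
  unfold pb1 pb2 q5Cubic rb; ring

theorem ps2_sq_mul_sub_ps1_sq (t : ℝ) :
    ps2 t ^ 2 * (3 * (506 + 75 * t - t ^ 3)) - ps1 t ^ 2 =
      (13 + t) ^ 4 * (t - 11) * q5Cubic t * rs t := by
  unfold ps1 ps2 q5Cubic rs; ring

section Signs

variable {t : ℝ}

theorem radicand_pos (ht : t < 11) : 0 < 3 * (506 + 75 * t - t ^ 3) := by
  have hfactor : 506 + 75 * t - t ^ 3 = (11 - t) * ((t + 11 / 2) ^ 2 + 63 / 4) := by ring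
  rw [hfactor]
  have : 0 < 11 - t := by linarith
  positivity

theorem q5Cubic_pos (h28 : -28 < t) (h13 : t < -13) : 0 < q5Cubic t := by
  obtain ⟨u, hu, hu15, rfl⟩ : ∃ u, 0 < u ∧ u < 15 ∧ t = -13 - u :=
    ⟨-13 - t, by linarith, by linarith, by ring⟩
  have hstep (k : ℕ) : u * u ^ k ≤ 15 * u ^ k :=
    mul_le_mul_of_nonneg_right hu15.le (pow_nonneg hu.le k)
  unfold q5Cubic
  linarith [hstep 2, pow_pos hu 2]

theorem q5_neg (h28 : -28 < t) (h13 : t < -13) : q5 t < 0 := by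
  have h11 : 0 < (t - 11) ^ 2 := Even.pow_pos (by decide) (by linarith)
  have h5 : (13 + t) ^ 5 < 0 := Odd.pow_neg (by decide) (by linarith)
  exact mul_neg_of_neg_of_pos (mul_neg_of_pos_of_neg h11 h5) (q5Cubic_pos h28 h13)

theorem pa2_neg (h13 : t < -13) : pa2 t < 0 := by
  obtain ⟨u, hu, rfl⟩ : ∃ u, 0 < u ∧ t = -13 - u := ⟨-13 - t, by linarith, by ring⟩
  unfold pa2
  linarith [pow_pos hu 2, pow_pos hu 3, pow_pos hu 4, pow_pos hu 5, pow_pos hu 6, pow_pos hu 7,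
    pow_pos hu 8]

theorem pb2_neg (h13 : t < -13) : pb2 t < 0 := by
  obtain ⟨u, hu, rfl⟩ : ∃ u, 0 < u ∧ t = -13 - u := ⟨-13 - t, by linarith, by ring⟩
  unfold pb2
  linarith [pow_pos hu 2, pow_pos hu 3, pow_pos hu 4, pow_pos hu 5]

theorem ps2_neg (h13 : t < -13) : ps2 t < 0 := by
  obtain ⟨u, hu, rfl⟩ : ∃ u, 0 < u ∧ t = -13 - u := ⟨-13 - t, by linarith, by ring⟩
  unfold ps2
  linarith [pow_pos hu 2, pow_pos hu 3, pow_pos hu 4, pow_pos hu 5, pow_pos hu 6, pow_pos hu 7,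
    pow_pos hu 8]

/- In `u = -13 - t ∈ (0, 15)` the few positive coefficients of `ra`, `rb`, `rs` are absorbed by
lower-degree terms via `u ^ (k + 1) ≤ 15 u ^ k`. -/
theorem ra_neg (h28 : -28 < t) (h13 : t < -13) : ra t < 0 := by
  obtain ⟨u, hu, hu15, rfl⟩ : ∃ u, 0 < u ∧ u < 15 ∧ t = -13 - u :=
    ⟨-13 - t, by linarith, by linarith, by ring⟩
  have hstep (k : ℕ) : u * u ^ k ≤ 15 * u ^ k :=
    mul_le_mul_of_nonneg_right hu15.le (pow_nonneg hu.le k)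
  unfold ra
  linarith [pow_pos hu 2, pow_pos hu 3, pow_pos hu 4, pow_pos hu 5, pow_pos hu 6, pow_pos hu 7,
    pow_pos hu 8, pow_pos hu 9, pow_pos hu 10, pow_pos hu 12, hstep 10]

theorem rb_neg (h28 : -28 < t) (h13 : t < -13) : rb t < 0 := by
  obtain ⟨u, hu, hu15, rfl⟩ : ∃ u, 0 < u ∧ u < 15 ∧ t = -13 - u :=
    ⟨-13 - t, by linarith, by linarith, by ring⟩
  have hstep (k : ℕ) : u * u ^ k ≤ 15 * u ^ k :=
    mul_le_mul_of_nonneg_right hu15.le (pow_nonneg hu.le k)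
  unfold rb
  linarith [pow_pos hu 2, pow_pos hu 3, pow_pos hu 4, pow_pos hu 5, pow_pos hu 6, pow_pos hu 7,
    pow_pos hu 8, pow_pos hu 12, hstep 7, hstep 8, hstep 9]

theorem rs_neg (h28 : -28 < t) (h13 : t < -13) : rs t < 0 := by
  obtain ⟨u, hu, hu15, rfl⟩ : ∃ u, 0 < u ∧ u < 15 ∧ t = -13 - u :=
    ⟨-13 - t, by linarith, by linarith, by ring⟩
  have hstep (k : ℕ) : u * u ^ k ≤ 15 * u ^ k :=
    mul_le_mul_of_nonneg_right hu15.le (pow_nonneg hu.le k)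
  unfold rs
  linarith [pow_pos hu 2, pow_pos hu 3, pow_pos hu 4, pow_pos hu 5, pow_pos hu 6, pow_pos hu 10,
    pow_pos hu 11, pow_pos hu 12, hstep 5, hstep 6, hstep 7, hstep 8]

theorem factor_pos_of_neg (h28 : -28 < t) (h13 : t < -13) {r : ℝ} (hr : r < 0) :
    0 < (13 + t) ^ 4 * (t - 11) * q5Cubic t * r := by
  have h4 : 0 < (13 + t) ^ 4 := Even.pow_pos (by decide) (by linarith)
  exact mul_pos_of_neg_of_neg
    (mul_neg_of_neg_of_pos (mul_neg_of_pos_of_neg h4 (by linarith)) (q5Cubic_pos h28 h13)) hr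

theorem pa1_sq_lt (h28 : -28 < t) (h13 : t < -13) :
    pa1 t ^ 2 < pa2 t ^ 2 * (3 * (506 + 75 * t - t ^ 3)) :=
  sub_pos.1 <| by
    rw [pa2_sq_mul_sub_pa1_sq]; exact factor_pos_of_neg h28 h13 (ra_neg h28 h13)

theorem pb1_sq_lt (h28 : -28 < t) (h13 : t < -13) :
    pb1 t ^ 2 < pb2 t ^ 2 * (3 * (506 + 75 * t - t ^ 3)) :=
  sub_pos.1 <| by
    rw [pb2_sq_mul_sub_pb1_sq]; exact factor_pos_of_neg h28 h13 (rb_neg h28 h13)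

theorem ps1_sq_lt (h28 : -28 < t) (h13 : t < -13) :
    ps1 t ^ 2 < ps2 t ^ 2 * (3 * (506 + 75 * t - t ^ 3)) :=
  sub_pos.1 <| by
    rw [ps2_sq_mul_sub_ps1_sq]; exact factor_pos_of_neg h28 h13 (rs_neg h28 h13)

end Signs

theorem stmt0_general (θ : ℝ)
    (hθroot : θ ^ 3 + 27 * θ ^ 2 - 93 * θ - 1847 = 0) :
    ∀ t ∈ Set.Ioo θ (-13 : ℝ),
      3 * (506 + 75 * t - t ^ 3) > 0 ∧
      q5 t < 0 ∧
      (pa1 t + pa2 t * ω t) / q5 t > 0 ∧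
      (pb1 t + pb2 t * ω t) / q5 t > 0 ∧
      (ps1 t + ps2 t * ω t) / q5 t > 0 ∧
      0 < α t ∧ 0 < β t ∧ 0 < s t := by
  rintro t ⟨hθt, h13⟩
  have h28 : -28 < t := (gt_neg_28_of_cubic_eq_zero hθroot).trans hθt
  have hq5 := q5_neg h28 h13
  have hA : (pa1 t + pa2 t * ω t) / q5 t > 0 :=
    div_pos_of_neg_of_neg (add_mul_sqrt_neg (pa2_neg h13) (pa1_sq_lt h28 h13)) hq5
  have hB : (pb1 t + pb2 t * ω t) / q5 t > 0 :=
    div_pos_of_neg_of_neg (add_mul_sqrt_neg (pb2_neg h13) (pb1_sq_lt h28 h13)) hq5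
  have hS : (ps1 t + ps2 t * ω t) / q5 t > 0 :=
    div_pos_of_neg_of_neg (add_mul_sqrt_neg (ps2_neg h13) (ps1_sq_lt h28 h13)) hq5
  exact ⟨radicand_pos (by linarith), hq5, hA, hB, hS, Real.sqrt_pos.2 hA, Real.sqrt_pos.2 hB,
    mul_pos (by norm_num) (Real.sqrt_pos.2 hS)⟩

/-- for every t in I = (θ, −13), where θ is the smallest real root of
x³ + 27x² − 93x − 1847, the radicand of ω is positive, q5(t) is negative, the three
quotients defining α, β, s are strictly positive, and hence α(t), β(t), s(t) are
well-defined positive real numbers. -/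
theorem stmt0 (θ : ℝ)
    (hθroot : θ ^ 3 + 27 * θ ^ 2 - 93 * θ - 1847 = 0)
    (hθmin : ∀ x : ℝ, x ^ 3 + 27 * x ^ 2 - 93 * x - 1847 = 0 → θ ≤ x) :
    ∀ t ∈ Set.Ioo θ (-13 : ℝ),
      3 * (506 + 75 * t - t ^ 3) > 0 ∧
      q5 t < 0 ∧
      (pa1 t + pa2 t * ω t) / q5 t > 0 ∧
      (pb1 t + pb2 t * ω t) / q5 t > 0 ∧
      (ps1 t + ps2 t * ω t) / q5 t > 0 ∧
      0 < α t ∧ 0 < β t ∧ 0 < s t :=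
  stmt0_general θ hθroot
end
end

section
/- For every real number t in the open interval I = (θ, −13): the inner radicand 3(11−t)·(p12(t) − 2ω(t)·p10(t)) is nonnegative, the two outer radicands ((t−11)·p9(t) − 16ω(t)(1+t)^2·p6(t) ± 8(1+t)^2(13+t)·√(3(11−t)(p12(t) − 2ω(t)·p10(t))))/q5(t) are nonnegative, and the equioscillation points z2(t) = −√(((t−11)·p9(t) − 16ω(t)(1+t)^2·p6(t) + 8(1+t)^2(13+t)·√(3(11−t)(p12(t) − 2ω(t)·p10(t))))/q5(t)) and z4(t) = √(((t−11)·p9(t) − 16ω(t)(1+t)^2·p6(t) − 8(1+t)^2(13+t)·√(3(11−t)(p12(t) − 2ω(t)·p10(t))))/q5(t)) satisfy −1 < z2(t) < 0 ≤ z4(t) < 1. -/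
/-!
Fix `t ∈ [-28, -13)` and write `ω = ω t`, so that `ω² = ωSq t = 3 (506 + 75 t - t³) > 0`. The sign
of an element `x + ω y` of `ℝ[t][ω]` is read off the sign of `x` (or of `y`) and the sign of its
norm `x² - ω² y²`, a polynomial in `t`. Every polynomial whose sign is needed is a perfect square
or, once powers of the factors `-13 - t`, `-1 - t`, `11 - t` are split off, has positive
coordinates in the Bernstein basis of `[-28, -13]`.

With `C` the common part of the two outer numerators and `S = 8 (1 + t)² (-13 - t) √inner ≥ 0`, the
outer radicands are `(C ∓ S) / q5` with `q5 < 0`, so everything follows from `C < 0`, `S ≤ -C` and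
`q5 < C - S`. As `S²` lies in `ℝ[t][ω]`, the last two are the signs of `C² - S²` and
`(C - q5)² - S²`, which are decided by their norms in the same way.
-/

noncomputable section

def p9 (t : ℝ) : ℝ :=
  7458346453 + 2414057145 * t + 80738436 * t ^ 2 - 35137404 * t ^ 3 + 943590 * t ^ 4 +
    1460238 * t ^ 5 + 136212 * t ^ 6 + 4020 * t ^ 7 - 339 * t ^ 8 + t ^ 9

def p6 (t : ℝ) : ℝ :=
  -4757750 - 991641 * t + 35097 * t ^ 2 + 1478 * t ^ 3 - 84 * t ^ 4 - 93 * t ^ 5 + t ^ 6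

def p12 (t : ℝ) : ℝ :=
  9627927080284 + 4974116032425 * t + 1038680780799 * t ^ 2 + 126082292719 * t ^ 3 +
    6771588669 * t ^ 4 + 996190362 * t ^ 5 + 407573430 * t ^ 6 + 26107902 * t ^ 7 -
    4154346 * t ^ 8 - 474323 * t ^ 9 + 59547 * t ^ 10 - 861 * t ^ 11 + t ^ 12

def p10 (t : ℝ) : ℝ :=
  122595778519 + 52782140344 * t + 8848501713 * t ^ 2 + 1458683184 * t ^ 3 +
    201606006 * t ^ 4 + 6367392 * t ^ 5 - 2103342 * t ^ 6 - 42288 * t ^ 7 +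
    68355 * t ^ 8 - 2648 * t ^ 9 + 13 * t ^ 10

def inner (t : ℝ) : ℝ := 3 * (11 - t) * (p12 t - 2 * ω t * p10 t)

def outerPlus (t : ℝ) : ℝ :=
  ((t - 11) * p9 t - 16 * ω t * (1 + t) ^ 2 * p6 t +
    8 * (1 + t) ^ 2 * (13 + t) * Real.sqrt (inner t)) / q5 t

def outerMinus (t : ℝ) : ℝ :=
  ((t - 11) * p9 t - 16 * ω t * (1 + t) ^ 2 * p6 t -
    8 * (1 + t) ^ 2 * (13 + t) * Real.sqrt (inner t)) / q5 t

def z2 (t : ℝ) : ℝ := -Real.sqrt (outerPlus t)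

def z4 (t : ℝ) : ℝ := Real.sqrt (outerMinus t)

open Set

/-- `bernsteinForm a b [c₀, …, cₙ] t = ∑ cᵢ (t - a) ^ i (b - t) ^ (n - i)`: coordinates in the
Bernstein basis of `[a, b]`, with the binomial coefficients and `(b - a) ^ n` absorbed into the
`cᵢ`. -/
def bernsteinForm (a b : ℝ) : List ℝ → ℝ → ℝ
  | [], _ => 0
  | c :: cs, t => c * (b - t) ^ cs.length + (t - a) * bernsteinForm a b cs t

theorem bernsteinForm_nonneg {a b t : ℝ} (ht : t ∈ Icc a b) :
    ∀ {cs : List ℝ}, (∀ c ∈ cs, 0 ≤ c) → 0 ≤ bernsteinForm a b cs t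
  | [], _ => le_rfl
  | c :: cs, hcs => by
    rw [List.forall_mem_cons] at hcs
    exact add_nonneg (mul_nonneg hcs.1 (pow_nonneg (sub_nonneg.2 ht.2) _))
      (mul_nonneg (sub_nonneg.2 ht.1) (bernsteinForm_nonneg ht hcs.2))

theorem bernsteinForm_cons_pos {a b t c : ℝ} {cs : List ℝ} (ht : t ∈ Ico a b) (hc : 0 < c)
    (hcs : ∀ d ∈ cs, 0 ≤ d) : 0 < bernsteinForm a b (c :: cs) t :=
  add_pos_of_pos_of_nonneg (mul_pos hc (pow_pos (sub_pos.2 ht.2) _))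
    (mul_nonneg (sub_nonneg.2 ht.1) (bernsteinForm_nonneg (Ico_subset_Icc_self ht) hcs))

section SqrtComparison

variable {d x y : ℝ}

theorem sqrt_mul_le_of_sq_le (hd : 0 ≤ d) (hx : 0 ≤ x) (h : d * y ^ 2 ≤ x ^ 2) :
    √d * y ≤ x :=
  (abs_le_of_sq_le_sq' (by rwa [mul_pow, Real.sq_sqrt hd]) hx).2

theorem sqrt_mul_lt_of_sq_lt (hd : 0 ≤ d) (hx : 0 ≤ x) (h : d * y ^ 2 < x ^ 2) :
    √d * y < x :=
  (abs_lt_of_sq_lt_sq' (by rwa [mul_pow, Real.sq_sqrt hd]) hx).2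

theorem lt_sqrt_mul_of_sq_lt (hd : 0 ≤ d) (hy : 0 ≤ y) (h : x ^ 2 < d * y ^ 2) :
    x < √d * y :=
  (abs_lt_of_sq_lt_sq' (by rwa [mul_pow, Real.sq_sqrt hd]) (mul_nonneg (Real.sqrt_nonneg d) hy)).2

end SqrtComparison

theorem neg_28_lt_of_cubic_eq_zero {θ : ℝ} (hθ : θ ^ 3 + 27 * θ ^ 2 - 93 * θ - 1847 = 0) :
    -28 < θ := by
  have hfactor : (θ + 28) * (θ ^ 2 - θ - 65) = 27 := by linear_combination hθ
  by_contra! hθ28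
  have hquad : 0 < θ ^ 2 - θ - 65 := by nlinarith
  nlinarith

def ωSq (t : ℝ) : ℝ := 3 * (506 + 75 * t - t ^ 3)

def outerCenter (t : ℝ) : ℝ := (t - 11) * p9 t - 16 * ω t * (1 + t) ^ 2 * p6 t

def outerSpread (t : ℝ) : ℝ := 8 * (1 + t) ^ 2 * (-13 - t) * √(_root_.inner t)

def marginRe (c t : ℝ) : ℝ :=
  ((t - 11) * p9 t - c) ^ 2 + ωSq t * (16 * (1 + t) ^ 2 * p6 t) ^ 2 -
    192 * (1 + t) ^ 4 * (13 + t) ^ 2 * (11 - t) * p12 t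

def marginIm (c t : ℝ) : ℝ :=
  384 * (1 + t) ^ 4 * (13 + t) ^ 2 * (11 - t) * p10 t -
    32 * ((t - 11) * p9 t - c) * (1 + t) ^ 2 * p6 t

theorem outerPlus_eq (t : ℝ) : outerPlus t = (outerCenter t - outerSpread t) / q5 t := by
  unfold outerPlus outerCenter outerSpread
  ring

theorem outerMinus_eq (t : ℝ) : outerMinus t = (outerCenter t + outerSpread t) / q5 t := by
  unfold outerMinus outerCenter outerSpread
  ring

theorem sq_outerCenter_sub_sub_sq_outerSpread {t : ℝ} (hω : 0 ≤ ωSq t)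
    (hinner : 0 ≤ _root_.inner t) (c : ℝ) :
    (outerCenter t - c) ^ 2 - outerSpread t ^ 2 = marginRe c t + ω t * marginIm c t := by
  have hω2 : ω t ^ 2 = ωSq t := Real.sq_sqrt hω
  have hs : √(_root_.inner t) ^ 2 = _root_.inner t := Real.sq_sqrt hinner
  unfold outerCenter outerSpread marginRe marginIm _root_.inner at *
  linear_combination (16 * (1 + t) ^ 2 * p6 t) ^ 2 * hω2 - (8 * (1 + t) ^ 2 * (-13 - t)) ^ 2 * hs

theorem ωSq_mul_sq_marginIm_zero_le (t : ℝ) :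
    ωSq t * marginIm 0 t ^ 2 ≤ marginRe 0 t ^ 2 := by
  have h : marginRe 0 t ^ 2 - ωSq t * marginIm 0 t ^ 2 = ((t - 11) ^ 4 * (-13 - t) ^ 5 *
      (-1235970967883 - 540477048829 * t - 30069596789 * t ^ 2 + 23901956805 * t ^ 3 +
        7614826674 * t ^ 4 + 1284657438 * t ^ 5 + 135252246 * t ^ 6 + 8603754 * t ^ 7 +
        300297 * t ^ 8 + 16303 * t ^ 9 + 239 * t ^ 10 + t ^ 11)) ^ 2 := by
    simp only [marginRe, marginIm, p9, p6, p10, p12, ωSq]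
    ring
  rw [← sub_nonneg, h]
  exact sq_nonneg _

section Interval

variable {t : ℝ}

theorem ωSq_pos (ht : t ∈ Ico (-28 : ℝ) (-13)) : 0 < ωSq t := by
  have h : ωSq t = bernsteinForm (-28) (-13) [2262 / 125, 2991 / 125, 1296 / 125, 192 / 125] t := by
    simp only [ωSq, bernsteinForm, List.length_cons, List.length_nil]
    ring
  exact h ▸ bernsteinForm_cons_pos ht (by norm_num) (by norm_num)

theorem p6_pos (ht : t ∈ Ico (-28 : ℝ) (-13)) : 0 < p6 t := by
  have h : p6 t = bernsteinForm (-28) (-13) [2810566 / 15625, 9020141 / 15625, 2387888 / 3125,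
      1681984 / 3125, 670208 / 3125, 720896 / 15625, 65536 / 15625] t := by
    simp only [p6, bernsteinForm, List.length_cons, List.length_nil]
    ring
  exact h ▸ bernsteinForm_cons_pos ht (by norm_num) (by norm_num)

theorem p12_pos (ht : t ∈ Ico (-28 : ℝ) (-13)) : 0 < p12 t := by
  have h : p12 t = bernsteinForm (-28) (-13) [10645663947344 / 48828125, 13898670006887 / 9765625,
      205873651131176 / 48828125, 73250989357688 / 9765625, 87217388567232 / 9765625,
      366342322398208 / 48828125, 44557347872768 / 9765625, 98883838902272 / 48828125,
      6362142343168 / 9765625, 1447519322112 / 9765625, 1106105073664 / 48828125,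
      20401094656 / 9765625, 4294967296 / 48828125] t := by
    simp only [p12, bernsteinForm, List.length_cons, List.length_nil]
    ring
  exact h ▸ bernsteinForm_cons_pos ht (by norm_num) (by norm_num)

theorem q5_neg_s4 (ht : t ∈ Ico (-28 : ℝ) (-13)) : q5 t < 0 := by
  have h : -1763 + 75 * t + 111 * t ^ 2 + t ^ 3 = bernsteinForm (-28) (-13) [2267 / 125, 4696 / 125,
      2816 / 125, 512 / 125] t := by
    simp only [bernsteinForm, List.length_cons, List.length_nil]
    ring
  have hcubic := h ▸ bernsteinForm_cons_pos ht (by norm_num) (by norm_num)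
  have h13 : (13 + t) ^ 5 < 0 := Odd.pow_neg (by decide) (by linarith [ht.2])
  exact mul_neg_of_neg_of_pos
    (mul_neg_of_pos_of_neg (sq_pos_of_neg (by linarith [ht.2])) h13) hcubic

theorem q5_lt_mul_p9 (ht : t ∈ Ico (-28 : ℝ) (-13)) : q5 t < (t - 11) * p9 t := by
  have h : (t - 11) * p9 t - q5 t = bernsteinForm (-28) (-13) [302848199784 / 1953125,
      1284457341456 / 1953125, 2426947031424 / 1953125, 2683680589056 / 1953125,
      1915452893184 / 1953125, 915768950784 / 1953125, 293463392256 / 1953125,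
      60816359424 / 1953125, 7398752256 / 1953125, 402653184 / 1953125] t := by
    simp only [p9, q5, bernsteinForm, List.length_cons, List.length_nil]
    ring
  exact sub_pos.1 (h ▸ bernsteinForm_cons_pos ht (by norm_num) (by norm_num))

theorem ωSq_mul_sq_two_mul_p10_le (ht : t ∈ Ico (-28 : ℝ) (-13)) :
    ωSq t * (2 * p10 t) ^ 2 ≤ p12 t ^ 2 := by
  have h : p12 t ^ 2 - ωSq t * (2 * p10 t) ^ 2 = (-13 - t) ^ 9 *
      bernsteinForm (-28) (-13) [248 / 25, 388 / 25, 197 / 25, 32 / 25] t *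
      (-488351 - 449946 * t + 66639 * t ^ 2 + 27476 * t ^ 3 - 657 * t ^ 4 + 102 * t ^ 5 +
        t ^ 6) ^ 2 := by
    simp only [p12, p10, ωSq, bernsteinForm, List.length_cons, List.length_nil]
    ring
  rw [← sub_nonneg, h]
  exact mul_nonneg (mul_nonneg (pow_nonneg (by linarith [ht.2]) _)
    (bernsteinForm_cons_pos ht (by norm_num) (by norm_num)).le) (sq_nonneg _)

theorem sq_mul_p9_lt_ωSq_mul (ht : t ∈ Ico (-28 : ℝ) (-13)) :
    ((t - 11) * p9 t) ^ 2 < ωSq t * (16 * (1 + t) ^ 2 * p6 t) ^ 2 := by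
  have h : ωSq t * (16 * (1 + t) ^ 2 * p6 t) ^ 2 - ((t - 11) * p9 t) ^ 2 =
      (-13 - t) ^ 5 * bernsteinForm (-28) (-13) [17088275707224787 / 30517578125,
          29411602587135744 / 6103515625, 116989492795313184 / 6103515625,
          57117077291385856 / 1220703125, 478915585259662848 / 6103515625,
          2924673972619493376 / 30517578125, 538003024905289728 / 6103515625,
          379773751907319808 / 6103515625, 41520670787764224 / 1220703125,
          87950225682989056 / 6103515625, 143298027916886016 / 30517578125,
          7058805997174784 / 6103515625, 1272707257729024 / 6103515625, 31731218382848 / 1220703125,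
          12232066859008 / 6103515625, 2199023255552 / 30517578125] t := by
    simp only [p9, p6, ωSq, bernsteinForm, List.length_cons, List.length_nil]
    ring
  rw [← sub_pos, h]
  exact mul_pos (pow_pos (by linarith [ht.2]) _)
    (bernsteinForm_cons_pos ht (by norm_num) (by norm_num))

theorem ωSq_mul_lt_sq_mul_p9_sub_q5 (ht : t ∈ Ico (-28 : ℝ) (-13)) :
    ωSq t * (16 * (1 + t) ^ 2 * p6 t) ^ 2 < ((t - 11) * p9 t - q5 t) ^ 2 := by
  have h : ((t - 11) * p9 t - q5 t) ^ 2 - ωSq t * (16 * (1 + t) ^ 2 * p6 t) ^ 2 =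
      ((-13 - t) * (-1 - t)) ^ 5 * bernsteinForm (-28) (-13) [3038413889472 / 1953125,
          16159308700608 / 1953125, 37578189679872 / 1953125, 50343499849728 / 1953125,
          42957717061632 / 1953125, 24281192988672 / 1953125, 9115096055808 / 1953125,
          2196422787072 / 1953125, 308834992128 / 1953125, 19327352832 / 1953125] t := by
    simp only [p9, p6, q5, ωSq, bernsteinForm, List.length_cons, List.length_nil]
    ring
  rw [← sub_pos, h]
  exact mul_pos (pow_pos (mul_pos (by linarith [ht.2]) (by linarith [ht.2])) _)
    (bernsteinForm_cons_pos ht (by norm_num) (by norm_num))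

theorem marginRe_zero_pos (ht : t ∈ Ico (-28 : ℝ) (-13)) : 0 < marginRe 0 t := by
  have h : marginRe 0 t = bernsteinForm (-28) (-13) [12690375030909517414993 / 95367431640625,
      27586374914982999964992 / 19073486328125, 141941886739764425986464 / 19073486328125,
      459734556968221978087424 / 19073486328125, 1051261722602845159695872 / 19073486328125,
      9020473542561861355651072 / 95367431640625, 2410991674228960274743296 / 19073486328125,
      2569423836793119519014912 / 19073486328125, 2217848727137025447165952 / 19073486328125,
      1565921562897270960029696 / 19073486328125, 4546929503263920654123008 / 95367431640625,
      435174753584404460732416 / 19073486328125, 171316713146777266552832 / 19073486328125,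
      55187377712591936684032 / 19073486328125, 14407281036609586200576 / 19073486328125,
      15008308124710728630272 / 95367431640625, 487478718826767450112 / 19073486328125,
      59486640103053328384 / 19073486328125, 5132414725342101504 / 19073486328125,
      279223176896970752 / 19073486328125, 36028797018963968 / 95367431640625] t := by
    simp only [marginRe, p9, p6, p12, ωSq, bernsteinForm, List.length_cons, List.length_nil]
    ring
  exact h ▸ bernsteinForm_cons_pos ht (by norm_num) (by norm_num)

theorem marginRe_q5_pos (ht : t ∈ Ico (-28 : ℝ) (-13)) : 0 < marginRe (q5 t) t := by
  have h : marginRe (q5 t) t = bernsteinForm (-28) (-13) [38792000495482010023104 / 19073486328125,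
      381170751449904195451776 / 19073486328125, 1772337279921990234845184 / 19073486328125,
      5182817439971061420466176 / 19073486328125, 10684634385679564734971904 / 19073486328125,
      16496325632266534045581312 / 19073486328125, 19777750673034115707568128 / 19073486328125,
      18840151153293472853655552 / 19073486328125, 14469117725194102901833728 / 19073486328125,
      9037168664643508698611712 / 19073486328125, 4609264461102560745357312 / 19073486328125,
      1919735199355498741628928 / 19073486328125, 650261749259205504663552 / 19073486328125,
      177579315134452809596928 / 19073486328125, 38532219697030823411712 / 19073486328125,
      6492787140473445679104 / 19073486328125, 819393641928066072576 / 19073486328125,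
      72905959617733853184 / 19073486328125, 4080261262397669376 / 19073486328125,
      108086391056891904 / 19073486328125] t := by
    simp only [marginRe, p9, p6, p12, q5, ωSq, bernsteinForm, List.length_cons, List.length_nil]
    ring
  exact h ▸ bernsteinForm_cons_pos ht (by norm_num) (by norm_num)

theorem ωSq_mul_sq_marginIm_q5_lt (ht : t ∈ Ico (-28 : ℝ) (-13)) :
    ωSq t * marginIm (q5 t) t ^ 2 < marginRe (q5 t) t ^ 2 := by
  have h : marginRe (q5 t) t ^ 2 - ωSq t * marginIm (q5 t) t ^ 2 =
      110592 * (11 - t) * (-1 - t) ^ 11 * q5 t ^ 2 * bernsteinForm (-28) (-13) [3009079 / 15625,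
          9985324 / 15625, 2820112 / 3125, 2142016 / 3125, 2740736 / 9375, 3100672 / 46875,
          98304 / 15625] t := by
    simp only [marginRe, marginIm, p9, p6, p10, p12, q5, ωSq, bernsteinForm, List.length_cons,
      List.length_nil]
    ring
  rw [← sub_pos, h]
  exact mul_pos (mul_pos (mul_pos (mul_pos (by norm_num) (by linarith [ht.2]))
    (pow_pos (by linarith [ht.2]) _)) (sq_pos_of_neg (q5_neg_s4 ht)))
    (bernsteinForm_cons_pos ht (by norm_num) (by norm_num))

theorem inner_nonneg (ht : t ∈ Ico (-28 : ℝ) (-13)) : 0 ≤ _root_.inner t := by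
  have h : ω t * (2 * p10 t) ≤ p12 t :=
    sqrt_mul_le_of_sq_le (ωSq_pos ht).le (p12_pos ht).le (ωSq_mul_sq_two_mul_p10_le ht)
  exact mul_nonneg (by linarith [ht.2]) (by linarith)

theorem outerSpread_nonneg (ht : t ∈ Ico (-28 : ℝ) (-13)) : 0 ≤ outerSpread t :=
  mul_nonneg (mul_nonneg (by positivity) (by linarith [ht.2])) (Real.sqrt_nonneg _)

theorem outerCenter_neg (ht : t ∈ Ico (-28 : ℝ) (-13)) : outerCenter t < 0 := by
  have h : (t - 11) * p9 t < ω t * (16 * (1 + t) ^ 2 * p6 t) :=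
    lt_sqrt_mul_of_sq_lt (ωSq_pos ht).le (mul_nonneg (by positivity) (p6_pos ht).le)
      (sq_mul_p9_lt_ωSq_mul ht)
  unfold outerCenter
  linarith

theorem outerSpread_le_neg_outerCenter (ht : t ∈ Ico (-28 : ℝ) (-13)) :
    outerSpread t ≤ -outerCenter t := by
  have hmargin : ω t * -marginIm 0 t ≤ marginRe 0 t :=
    sqrt_mul_le_of_sq_le (ωSq_pos ht).le (marginRe_zero_pos ht).le
      (by rw [neg_sq]; exact ωSq_mul_sq_marginIm_zero_le t)
  have hsq := sq_outerCenter_sub_sub_sq_outerSpread (ωSq_pos ht).le (inner_nonneg ht) 0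
  rw [sub_zero] at hsq
  exact (abs_le_of_sq_le_sq' (by rw [neg_sq]; linarith) (by linarith [outerCenter_neg ht])).2

theorem q5_lt_outerCenter (ht : t ∈ Ico (-28 : ℝ) (-13)) : q5 t < outerCenter t := by
  have h : ω t * (16 * (1 + t) ^ 2 * p6 t) < (t - 11) * p9 t - q5 t :=
    sqrt_mul_lt_of_sq_lt (ωSq_pos ht).le (sub_nonneg.2 (q5_lt_mul_p9 ht).le)
      (ωSq_mul_lt_sq_mul_p9_sub_q5 ht)
  unfold outerCenter
  linarith

theorem q5_lt_outerCenter_sub_outerSpread (ht : t ∈ Ico (-28 : ℝ) (-13)) :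
    q5 t < outerCenter t - outerSpread t := by
  have hmargin : ω t * -marginIm (q5 t) t < marginRe (q5 t) t :=
    sqrt_mul_lt_of_sq_lt (ωSq_pos ht).le (marginRe_q5_pos ht).le
      (by rw [neg_sq]; exact ωSq_mul_sq_marginIm_q5_lt ht)
  have hsq := sq_outerCenter_sub_sub_sq_outerSpread (ωSq_pos ht).le (inner_nonneg ht) (q5 t)
  have hspread : outerSpread t < outerCenter t - q5 t :=
    (abs_lt_of_sq_lt_sq' (by linarith) (sub_nonneg.2 (q5_lt_outerCenter ht).le)).2
  linarith

theorem outerPlus_mem_Ioo (ht : t ∈ Ico (-28 : ℝ) (-13)) : outerPlus t ∈ Ioo 0 1 := by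
  rw [outerPlus_eq]
  exact ⟨div_pos_of_neg_of_neg (by linarith [outerCenter_neg ht, outerSpread_nonneg ht])
      (q5_neg_s4 ht),
    (div_lt_one_of_neg (q5_neg_s4 ht)).2 (q5_lt_outerCenter_sub_outerSpread ht)⟩

theorem outerMinus_mem_Ico (ht : t ∈ Ico (-28 : ℝ) (-13)) : outerMinus t ∈ Ico 0 1 := by
  rw [outerMinus_eq]
  exact ⟨div_nonneg_of_nonpos (by linarith [outerSpread_le_neg_outerCenter ht]) (q5_neg_s4 ht).le,
    (div_lt_one_of_neg (q5_neg_s4 ht)).2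
      (by linarith [q5_lt_outerCenter_sub_outerSpread ht, outerSpread_nonneg ht])⟩

end Interval

theorem stmt4_general (θ : ℝ)
    (hθroot : θ ^ 3 + 27 * θ ^ 2 - 93 * θ - 1847 = 0) :
    ∀ t ∈ Set.Ioo θ (-13 : ℝ),
      0 ≤ inner t ∧ 0 ≤ outerPlus t ∧ 0 ≤ outerMinus t ∧
      -1 < z2 t ∧ z2 t < 0 ∧ 0 ≤ z4 t ∧ z4 t < 1 := by
  rintro t ⟨hθt, ht13⟩
  have ht : t ∈ Ico (-28 : ℝ) (-13) :=
    ⟨by linarith [neg_28_lt_of_cubic_eq_zero hθroot], ht13⟩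
  obtain ⟨hplus_pos, hplus_lt⟩ := outerPlus_mem_Ioo ht
  obtain ⟨hminus_nonneg, hminus_lt⟩ := outerMinus_mem_Ico ht
  refine ⟨inner_nonneg ht, hplus_pos.le, hminus_nonneg, ?_, ?_, Real.sqrt_nonneg _, ?_⟩
  · exact neg_lt_neg (Real.sqrt_one ▸ Real.sqrt_lt_sqrt hplus_pos.le hplus_lt)
  · exact neg_neg_of_pos (Real.sqrt_pos.2 hplus_pos)
  · exact Real.sqrt_one ▸ Real.sqrt_lt_sqrt hminus_nonneg hminus_lt

/-- for every t ∈ I = (θ, −13), the inner radicand is nonnegative, both outer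
radicands are nonnegative, and the equioscillation points z₂(t), z₄(t) satisfy
−1 < z₂(t) < 0 ≤ z₄(t) < 1. -/
theorem stmt4 (θ : ℝ)
    (hθroot : θ ^ 3 + 27 * θ ^ 2 - 93 * θ - 1847 = 0)
    (hθmin : ∀ x : ℝ, x ^ 3 + 27 * x ^ 2 - 93 * x - 1847 = 0 → θ ≤ x) :
    ∀ t ∈ Set.Ioo θ (-13 : ℝ),
      0 ≤ inner t ∧ 0 ≤ outerPlus t ∧ 0 ≤ outerMinus t ∧
      -1 < z2 t ∧ z2 t < 0 ∧ 0 ≤ z4 t ∧ z4 t < 1 :=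
  stmt4_general θ hθroot
end
end
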